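/- For even n ≥ 2, the number of binary necklaces of length n containing an odd number of 1's equals (1/(2n))·Σ_{d | n, d odd} φ(d)·2^{n/d}. -/

import Mathlib

/-- Two binary strings of length `n` are rotation-equivalent. -/
def necklaceRel (n : ℕ) (f g : Fin n → Bool) : Prop :=
  ∃ k : ℕ, g = f ∘ ⇑((finRotate n) ^ k)

/-- Number of ones in a binary string. -/
def onesCount {n : ℕ} (f : Fin n → Bool) : ℕ :=
  (Finset.univ.filter (fun i => f i = true)).card

/-- Rotation relation restricted to strings with an odd number of ones. -/
def necklaceRelOdd (n : ℕ) (f g : {f : Fin n → Bool // Odd (onesCount f)}) : Prop :=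
  necklaceRel n f.1 g.1

/-!
Burnside's lemma for the cyclic group `Fin n` acting on odd-weight words by rotation. A rotation
`γ` of order `d` fixes exactly the words that are constant on the cosets of `⟨γ⟩`, i.e. the
pullbacks of words on the `n / d` cosets, in which every letter is repeated `d` times. Hence odd
fixed words exist only for odd `d`, and then there are `2 ^ (n / d - 1)` of them; since `φ d`
rotations have order `d`, `n` times the number of odd necklaces is
`∑ d ∣ n, d odd, φ d * 2 ^ (n / d - 1)`.
-/

open Finset Function

section OddWord

variable (α : Type*) [Fintype α]

abbrev OddWord := {f : α → Bool // Odd #{a | f a = true}}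

variable {α}

theorem odd_card_filter_update_not_iff [DecidableEq α] (f : α → Bool) (a : α) :
    Odd #{x | update f a (!f a) x = true} ↔ ¬Odd #{x | f x = true} := by
  have h_off : ∀ x ∈ ({a}ᶜ : Finset α),
      (if update f a (!f a) x = true then 1 else 0) = if f x = true then 1 else 0 := by
    intro x hx
    rw [update_of_ne (by simpa using hx)]
  simp only [card_filter]
  rw [Fintype.sum_eq_add_sum_compl a, Fintype.sum_eq_add_sum_compl a, sum_congr rfl h_off,
    update_self]
  cases f a <;> simp [parity_simps]

theorem two_mul_card_oddWord [Nonempty α] : 2 * Nat.card (OddWord α) = 2 ^ Fintype.card α := by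
  classical
  obtain ⟨a⟩ := ‹Nonempty α›
  let toggle : Equiv.Perm (α → Bool) :=
    Involutive.toPerm (fun f => update f a (!f a)) fun f => by simp
  have h_even : Nat.card {f : α → Bool // ¬Odd #{x | f x = true}} = Nat.card (OddWord α) :=
    Nat.card_congr (toggle.subtypeEquiv fun f => (odd_card_filter_update_not_iff f a).symm)
  rw [two_mul]
  nth_rewrite 1 [← h_even]
  rw [Nat.card_eq_fintype_card, Nat.card_eq_fintype_card, Fintype.card_subtype_compl,
    Nat.sub_add_cancel (Fintype.card_subtype_le _), Fintype.card_fun, Fintype.card_bool]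

end OddWord

section Translation

variable {G : Type*} [AddGroup G] [Fintype G]

instance : AddAction G (OddWord G) where
  vadd γ f := ⟨fun i => f.1 (i + γ), by
    convert f.2 using 1
    exact card_equiv (Equiv.addRight γ) (by simp)⟩
  zero_vadd f := by ext; simp [HVAdd.hVAdd]
  add_vadd γ δ f := by ext; simp [HVAdd.hVAdd, add_assoc]

@[simp]
theorem OddWord.vadd_apply (γ : G) (f : OddWord G) (i : G) : (γ +ᵥ f).1 i = f.1 (i + γ) := rfl

theorem OddWord.mem_fixedBy_iff {γ : G} {f : OddWord G} :
    f ∈ AddAction.fixedBy (OddWord G) γ ↔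
      ∀ h ∈ AddSubgroup.zmultiples γ, ∀ i, f.1 (i + h) = f.1 i := by
  rw [AddAction.mem_fixedBy, ← AddAction.mem_stabilizer_iff, ← AddSubgroup.zmultiples_le]
  refine forall₂_congr fun h _ => ?_
  rw [AddAction.mem_stabilizer_iff, Subtype.ext_iff, funext_iff]
  rfl

theorem card_filter_comp_mk (H : AddSubgroup G) [Fintype (G ⧸ H)] (F : G ⧸ H → Bool) :
    #{i : G | F i = true} = Nat.card H * #{q | F q = true} := by
  have := Nat.card_congr (QuotientAddGroup.preimageMkEquivAddSubgroupProdSet H {q | F q = true})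
  rw [Nat.card_prod] at this
  simpa only [Set.preimage_ofPred_eq, Set.coe_ofPred, Nat.card_eq_fintype_card,
    Fintype.card_subtype] using this

theorem two_mul_card_invariant_oddWord (H : AddSubgroup G) :
    2 * Nat.card {f : OddWord G // ∀ h ∈ H, ∀ i, f.1 (i + h) = f.1 i} =
      if Odd (Nat.card H) then 2 ^ H.index else 0 := by
  classical
  let lift (F : {F : G ⧸ H → Bool // Odd (Nat.card H) ∧ Odd #{q | F q = true}}) :
      {f : OddWord G // ∀ h ∈ H, ∀ i, f.1 (i + h) = f.1 i} :=
    ⟨⟨fun i => F.1 i, by rw [card_filter_comp_mk, Nat.odd_mul]; exact F.2⟩,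
      fun h hh i => by simp only [QuotientAddGroup.mk_add_of_mem i hh]⟩
  have lift_injective : Injective lift := fun F F' hFF' =>
    Subtype.ext (QuotientAddGroup.mk_surjective.injective_comp_right
      (congrArg (fun f => f.1.1) hFF'))
  have lift_surjective : Surjective lift := by
    intro f
    have h_out (i : G) : f.1.1 (i : G ⧸ H).out = f.1.1 i := by
      obtain ⟨h, hh⟩ := QuotientAddGroup.mk_out_eq_add H i
      rw [hh, f.2 h h.2]
    refine ⟨⟨fun q => f.1.1 q.out, ?_⟩, ?_⟩
    · have h_odd : Odd #{i : G | f.1.1 (i : G ⧸ H).out = true} := by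
        simpa only [h_out] using f.1.2
      rwa [card_filter_comp_mk H (fun q => f.1.1 q.out), Nat.odd_mul] at h_odd
    · exact Subtype.ext (Subtype.ext (funext h_out))
  rw [← Nat.card_congr (Equiv.ofBijective lift ⟨lift_injective, lift_surjective⟩)]
  split_ifs with hH
  · simp only [hH, true_and]
    rw [two_mul_card_oddWord, ← Nat.card_eq_fintype_card, ← AddSubgroup.index_eq_card]
  · rw [Nat.card_eq_zero.2 (.inl ⟨fun F => hH F.2.1⟩), mul_zero]

theorem OddWord.two_mul_card_fixedBy (γ : G) :
    2 * Nat.card (AddAction.fixedBy (OddWord G) γ) =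
      if Odd (addOrderOf γ) then 2 ^ (Fintype.card G / addOrderOf γ) else 0 := by
  have h_index : (AddSubgroup.zmultiples γ).index = Fintype.card G / addOrderOf γ := by
    refine Nat.eq_div_of_mul_eq_right (addOrderOf_pos γ).ne' ?_
    rw [← Nat.card_zmultiples, AddSubgroup.card_mul_index, Nat.card_eq_fintype_card]
  rw [Nat.card_congr (Equiv.subtypeEquivRight fun _ => OddWord.mem_fixedBy_iff),
    two_mul_card_invariant_oddWord, Nat.card_zmultiples, h_index]

theorem IsAddCyclic.sum_comp_addOrderOf {M : Type*} [AddCommMonoid M] [IsAddCyclic G]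
    (h : ℕ → M) :
    ∑ γ : G, h (addOrderOf γ) = ∑ d ∈ (Fintype.card G).divisors, d.totient • h d := by
  rw [← sum_fiberwise_of_maps_to fun γ _ => Nat.mem_divisors.2
    ⟨addOrderOf_dvd_card, Fintype.card_ne_zero (α := G)⟩]
  refine sum_congr rfl fun d hd => ?_
  rw [sum_congr rfl fun γ hγ => congrArg h (mem_filter.1 hγ).2, sum_const,
    IsAddCyclic.card_addOrderOf_eq_totient (Nat.dvd_of_mem_divisors hd)]

theorem two_mul_card_mul_card_orbits_oddWord [IsAddCyclic G] :
    2 * (Fintype.card G * Nat.card (AddAction.orbitRel.Quotient G (OddWord G))) =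
      ∑ d ∈ (Fintype.card G).divisors,
        d.totient * if Odd d then 2 ^ (Fintype.card G / d) else 0 := by
  classical
  calc 2 * (Fintype.card G * Nat.card (AddAction.orbitRel.Quotient G (OddWord G)))
      = ∑ γ : G, 2 * Nat.card (AddAction.fixedBy (OddWord G) γ) := by
        simp only [← mul_sum, Nat.card_eq_fintype_card,
          AddAction.sum_card_fixedBy_eq_card_orbits_mul_card_addGroup, mul_comm (Fintype.card G)]
    _ = ∑ γ : G, if Odd (addOrderOf γ) then 2 ^ (Fintype.card G / addOrderOf γ) else 0 :=
        sum_congr rfl fun γ _ => OddWord.two_mul_card_fixedBy γ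
    _ = _ := by
        rw [IsAddCyclic.sum_comp_addOrderOf fun d => if Odd d then 2 ^ (Fintype.card G / d) else 0]
        simp only [smul_eq_mul]

end Translation

section Necklace

open Fin.NatCast

variable {n : ℕ} [NeZero n]

instance : IsAddCyclic (Fin n) :=
  isAddCyclic_of_surjective (ZMod.finEquiv n).symm (ZMod.finEquiv n).symm.surjective

theorem finRotate_pow_apply (k : ℕ) (i : Fin n) : (finRotate n ^ k) i = i + (k : Fin n) := by
  induction k with
  | zero => simp
  | succ k ih =>
    rw [pow_succ', Equiv.Perm.mul_apply, ih, finRotate_apply, Nat.cast_succ, add_assoc]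

theorem necklaceRelOdd_iff {f g : OddWord (Fin n)} :
    necklaceRelOdd n f g ↔ g ∈ AddAction.orbit (Fin n) f := by
  constructor
  · rintro ⟨k, hk⟩
    exact ⟨k, Subtype.ext <| funext fun i => by simp [hk, finRotate_pow_apply]⟩
  · rintro ⟨γ, rfl⟩
    exact ⟨γ.val, funext fun i => by simp [finRotate_pow_apply]⟩

theorem card_quot_necklaceRelOdd :
    Nat.card (Quot (necklaceRelOdd n)) =
      Nat.card (AddAction.orbitRel.Quotient (Fin n) (OddWord (Fin n))) :=
  Nat.card_congr <| Quot.congrRight fun _ _ => necklaceRelOdd_iff.trans AddAction.mem_orbit_symm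

end Necklace

theorem necklaces_with_odd_ones_general (n : ℕ) :
    2 * n * Nat.card (Quot (necklaceRelOdd n)) =
      ∑ d ∈ n.divisors.filter (fun d => Odd d), d.totient * 2 ^ (n / d) := by
  rcases n.eq_zero_or_pos with rfl | hn
  · simp
  have : NeZero n := ⟨hn.ne'⟩
  have h_burnside := two_mul_card_mul_card_orbits_oddWord (G := Fin n)
  rw [Fintype.card_fin] at h_burnside
  rw [card_quot_necklaceRelOdd, mul_assoc, h_burnside, sum_filter]
  refine sum_congr rfl fun d _ => ?_
  split_ifs <;> simp

theorem necklaces_with_odd_ones (n : ℕ) (hn : 2 ≤ n) (he : Even n) :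
    2 * n * Nat.card (Quot (necklaceRelOdd n)) =
      ∑ d ∈ n.divisors.filter (fun d => Odd d), d.totient * 2 ^ (n / d) :=
  necklaces_with_odd_ones_general n
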